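/- arXiv:math/9411207 — 2 statements merged into one kernel-verified Lean document; each statement's English description precedes it below -/
import Mathlib

section
/- For every natural number n and every a < 2^n, the period of a in A_{n+1} either equals the period of a in A_n or is twice it: p_{n+1}(a) = p_n(a) or p_{n+1}(a) = 2·p_n(a). -/
/-!
Reduction modulo `2^n` is a homomorphism `A_{n+1} → A_n`; this is proved by descending induction
on the left argument, using that `a * b` is either `0` or larger than `a`. Hence `p_n(a)` divides
`p_{n+1}(a)`. If `p_{n+1}(a) > 2 p_n(a)`, then `a * p_n(a)` and `a * 2p_n(a)` are nonzero in
`A_{n+1}` but reduce to `0` in `A_n`, so both equal `2^n`; this contradicts the fact that row `a`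
is strictly increasing before its first zero.
-/

open Fin.NatCast

/-- The unique left self-distributive operation on `Fin (2^m)` with `a * 1 = a + 1`. -/
def IsCyclicLD (m : ℕ) (op : Fin (2^m) → Fin (2^m) → Fin (2^m)) : Prop :=
  (∀ a b c, op a (op b c) = op (op a b) (op a c)) ∧ ∀ a, op a 1 = a + 1

/-- The period `p_m(a)`: the least positive `p` with `a * (p mod 2^m) = 0`. -/
noncomputable def period (m : ℕ) (op : Fin (2^m) → Fin (2^m) → Fin (2^m))
    (a : Fin (2^m)) : ℕ :=
  sInf {p : ℕ | 0 < p ∧ op a ((p : ℕ) : Fin (2^m)) = 0}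

namespace Fin

variable {N : ℕ} [NeZero N]

@[elab_as_elim]
theorem induction_add_one {motive : Fin N → Prop} (one : motive 1)
    (add_one : ∀ b, motive b → motive (b + 1)) (b : Fin N) : motive b := by
  have h : ∀ k : ℕ, motive ((k + 1 : ℕ) : Fin N) := by
    intro k
    induction k with
    | zero => simpa using one
    | succ k ih => simpa using add_one _ ih
  have hb : ((b.val + (N - 1) + 1 : ℕ) : Fin N) = b := by
    rw [show b.val + (N - 1) + 1 = b.val + N by have := NeZero.pos N; omega]
    simp
  exact hb ▸ h _

theorem add_one_eq_zero_or_lt (a : Fin N) : a + 1 = 0 ∨ a < a + 1 := by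
  rcases Nat.lt_or_ge (a.val + 1) N with h | h
  · right
    rw [Fin.lt_def, Fin.val_add, Fin.val_one', Nat.add_mod_mod, Nat.mod_eq_of_lt h]
    omega
  · left
    ext
    rw [Fin.val_add, Fin.val_one', Nat.add_mod_mod, show a.val + 1 = N by omega]
    simp

end Fin

namespace IsCyclicLD

variable {m : ℕ} {op : Fin (2^m) → Fin (2^m) → Fin (2^m)}

theorem op_add_one (hop : IsCyclicLD m op) (a b : Fin (2^m)) :
    op a (b + 1) = op (op a b) (a + 1) := by
  rw [← hop.2 b, hop.1, hop.2]

theorem zero_op (hop : IsCyclicLD m op) (b : Fin (2^m)) : op 0 b = b := by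
  induction b using Fin.induction_add_one with
  | one => simpa using hop.2 0
  | add_one b ih => rw [hop.op_add_one, ih, zero_add, hop.2]

theorem op_eq_zero_or_lt (hop : IsCyclicLD m op) (a b : Fin (2^m)) :
    op a b = 0 ∨ a < op a b := by
  induction a using WellFoundedGT.induction generalizing b with
  | _ a ih =>
  induction b using Fin.induction_add_one with
  | one => rw [hop.2]; exact a.add_one_eq_zero_or_lt
  | add_one b hb =>
    rw [hop.op_add_one]
    rcases hb with h | h
    · rw [h, hop.zero_op]
      exact a.add_one_eq_zero_or_lt
    · exact (ih _ h (a + 1)).imp_right h.trans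

theorem op_add_one_eq_zero_or_lt (hop : IsCyclicLD m op) (a b : Fin (2^m)) :
    op a (b + 1) = 0 ∨ op a b < op a (b + 1) := by
  rw [hop.op_add_one]
  exact hop.op_eq_zero_or_lt _ _

theorem exists_op_natCast_eq_zero (hop : IsCyclicLD m op) (a : Fin (2^m)) :
    ∃ k : ℕ, 0 < k ∧ op a (k : Fin (2^m)) = 0 := by
  by_contra! h
  have hmono : StrictMono fun k : ℕ => op a ((k + 1 : ℕ) : Fin (2^m)) := by
    refine strictMono_nat_of_lt_succ fun k => ?_
    have hne := h (k + 1 + 1) (by omega)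
    rw [Nat.cast_add_one (k + 1)] at hne ⊢
    exact (hop.op_add_one_eq_zero_or_lt a _).resolve_left hne
  exact not_injective_infinite_finite _ hmono.injective

theorem period_pos_and_op_eq_zero (hop : IsCyclicLD m op) (a : Fin (2^m)) :
    0 < period m op a ∧ op a (period m op a : Fin (2^m)) = 0 :=
  Nat.sInf_mem (hop.exists_op_natCast_eq_zero a)

theorem period_le {a : Fin (2^m)} {k : ℕ} (hk : 0 < k) (h : op a (k : Fin (2^m)) = 0) :
    period m op a ≤ k :=
  Nat.sInf_le ⟨hk, h⟩

theorem periodic_op_natCast_add_one (hop : IsCyclicLD m op) (a : Fin (2^m)) :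
    Function.Periodic (fun k : ℕ => op a ((k : Fin (2^m)) + 1)) (period m op a) := by
  intro k
  induction k with
  | zero =>
    simp only [zero_add, hop.op_add_one a, (hop.period_pos_and_op_eq_zero a).2, hop.zero_op,
      Nat.cast_zero, hop.2]
  | succ k ih =>
    simp only [add_right_comm k 1, Nat.cast_add_one] at ih ⊢
    rw [hop.op_add_one a, ih, ← hop.op_add_one]

theorem op_natCast_eq_zero_iff (hop : IsCyclicLD m op) (a : Fin (2^m)) {k : ℕ} (hk : 0 < k) :
    op a (k : Fin (2^m)) = 0 ↔ period m op a ∣ k := by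
  obtain ⟨i, rfl⟩ : ∃ i, k = i + 1 := ⟨k - 1, by omega⟩
  obtain ⟨hp, hzero⟩ := hop.period_pos_and_op_eq_zero a
  have hmod := (hop.periodic_op_natCast_add_one a).map_mod_nat i
  have hmin : ∀ {j : ℕ}, 0 < j → op a (j : Fin (2^m)) = 0 → period m op a ≤ j := period_le
  generalize period m op a = p at *
  have hr : i % p < p := Nat.mod_lt i hp
  calc op a ((i + 1 : ℕ) : Fin (2^m)) = 0
      ↔ op a ((i % p + 1 : ℕ) : Fin (2^m)) = 0 := by
        rw [Nat.cast_add_one, Nat.cast_add_one, ← hmod]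
    _ ↔ i % p + 1 = p :=
        ⟨fun h => le_antisymm (by omega) (hmin (by omega) h), fun h => by rwa [h]⟩
    _ ↔ p ∣ i % p + 1 :=
        ⟨fun h => by rw [h], fun h => le_antisymm (by omega) (Nat.le_of_dvd (by omega) h)⟩
    _ ↔ p ∣ i + 1 := by
        rw [← Nat.dvd_add_right (dvd_mul_right p (i / p)), ← add_assoc, Nat.div_add_mod]

theorem strictMonoOn_op_natCast (hop : IsCyclicLD m op) (a : Fin (2^m)) :
    StrictMonoOn (fun k : ℕ => op a (k : Fin (2^m))) (Set.Ico 1 (period m op a)) := by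
  refine strictMonoOn_of_lt_succ Set.ordConnected_Ico fun k _ hk hk1 => ?_
  simp only [Order.succ_eq_add_one, Set.mem_Ico] at hk hk1 ⊢
  rw [Nat.cast_add_one]
  refine (hop.op_add_one_eq_zero_or_lt a _).resolve_left fun h => ?_
  rw [← Nat.cast_add_one] at h
  have := period_le (by omega) h
  omega

end IsCyclicLD

def proj (n : ℕ) (x : Fin (2^(n+1))) : Fin (2^n) := (x.val : Fin (2^n))

section proj

variable {n : ℕ}

theorem proj_natCast (k : ℕ) : proj n (k : Fin (2^(n+1))) = (k : Fin (2^n)) := by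
  ext
  simp only [proj, Fin.val_natCast]
  exact Nat.mod_mod_of_dvd k (pow_dvd_pow 2 n.le_succ)

theorem proj_zero : proj n 0 = 0 := by
  simpa using proj_natCast (n := n) 0

theorem proj_one : proj n 1 = 1 := by
  simpa using proj_natCast (n := n) 1

theorem proj_add_one (x : Fin (2^(n+1))) : proj n (x + 1) = proj n x + 1 := by
  conv_lhs => rw [← Fin.cast_val_eq_self x, ← Nat.cast_add_one, proj_natCast, Nat.cast_add_one]
  rfl

theorem val_eq_two_pow_of_proj_eq_zero {x : Fin (2^(n+1))} (hx : x ≠ 0) (h : proj n x = 0) :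
    x.val = 2^n := by
  have hdvd : 2^n ∣ x.val := by
    simpa [proj, Fin.ext_iff, Fin.val_natCast, Nat.dvd_iff_mod_eq_zero] using h
  have hpos : x.val ≠ 0 := fun h0 => hx (Fin.ext (by simp [h0]))
  obtain ⟨c, hc⟩ := hdvd
  have hlt : 2^n * c < 2^n * 2 := by rw [← hc, ← pow_succ]; exact x.isLt
  have : c = 1 := by
    have := Nat.lt_of_mul_lt_mul_left hlt
    interval_cases c <;> simp_all
  rw [hc, this, mul_one]

end proj

namespace IsCyclicLD

variable {n : ℕ} {op₀ : Fin (2^n) → Fin (2^n) → Fin (2^n)}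
  {op₁ : Fin (2^(n+1)) → Fin (2^(n+1)) → Fin (2^(n+1))}

theorem proj_op (hop₀ : IsCyclicLD n op₀) (hop₁ : IsCyclicLD (n+1) op₁) (x y : Fin (2^(n+1))) :
    proj n (op₁ x y) = op₀ (proj n x) (proj n y) := by
  induction x using WellFoundedGT.induction generalizing y with
  | _ x ih =>
  induction y using Fin.induction_add_one with
  | one => rw [hop₁.2, proj_add_one, proj_one, hop₀.2]
  | add_one y hy =>
    rw [hop₁.op_add_one, proj_add_one, hop₀.op_add_one, ← hy]
    rcases hop₁.op_eq_zero_or_lt x y with h | h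
    · rw [h, hop₁.zero_op, proj_zero, hop₀.zero_op, proj_add_one]
    · rw [ih _ h, proj_add_one]

theorem period_proj_dvd (hop₀ : IsCyclicLD n op₀) (hop₁ : IsCyclicLD (n+1) op₁)
    (x : Fin (2^(n+1))) : period n op₀ (proj n x) ∣ period (n+1) op₁ x := by
  obtain ⟨hp, hzero⟩ := hop₁.period_pos_and_op_eq_zero x
  rw [← hop₀.op_natCast_eq_zero_iff _ hp, ← proj_natCast, ← hop₀.proj_op hop₁, hzero, proj_zero]

theorem period_le_two_mul_period_proj (hop₀ : IsCyclicLD n op₀)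
    (hop₁ : IsCyclicLD (n+1) op₁) (x : Fin (2^(n+1))) :
    period (n+1) op₁ x ≤ 2 * period n op₀ (proj n x) := by
  set p₀ := period n op₀ (proj n x)
  have hp₀ : 0 < p₀ := (hop₀.period_pos_and_op_eq_zero _).1
  by_contra! hlt
  have hval : ∀ j, 0 < j → j ≤ 2 → (op₁ x ((j * p₀ : ℕ) : Fin (2^(n+1)))).val = 2^n := by
    intro j hj hj2
    refine val_eq_two_pow_of_proj_eq_zero (fun h => ?_) ?_
    · have := period_le (Nat.mul_pos hj hp₀) h
      nlinarith
    · rw [hop₀.proj_op hop₁, proj_natCast, hop₀.op_natCast_eq_zero_iff _ (Nat.mul_pos hj hp₀)]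
      exact dvd_mul_left _ _
  have hmono := hop₁.strictMonoOn_op_natCast x (show 1 * p₀ ∈ Set.Ico 1 _ from ⟨by omega, by omega⟩)
    (show 2 * p₀ ∈ Set.Ico 1 _ from ⟨by omega, by omega⟩) (by omega)
  rw [Fin.lt_def, hval 1 one_pos one_le_two, hval 2 two_pos le_rfl] at hmono
  exact lt_irrefl _ hmono

end IsCyclicLD

theorem period_stays_or_doubles_general (n : ℕ) (a : ℕ)
    (op₀ : Fin (2^n) → Fin (2^n) → Fin (2^n)) (hop₀ : IsCyclicLD n op₀)
    (op₁ : Fin (2^(n+1)) → Fin (2^(n+1)) → Fin (2^(n+1))) (hop₁ : IsCyclicLD (n+1) op₁) :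
    period (n+1) op₁ ((a : ℕ) : Fin (2^(n+1))) = period n op₀ ((a : ℕ) : Fin (2^n)) ∨
    period (n+1) op₁ ((a : ℕ) : Fin (2^(n+1))) = 2 * period n op₀ ((a : ℕ) : Fin (2^n)) := by
  have hdvd := hop₀.period_proj_dvd hop₁ (a : Fin (2^(n+1)))
  have hle := hop₀.period_le_two_mul_period_proj hop₁ (a : Fin (2^(n+1)))
  have hp₁ := (hop₁.period_pos_and_op_eq_zero (a : Fin (2^(n+1)))).1
  have hp₀ := (hop₀.period_pos_and_op_eq_zero (a : Fin (2^n))).1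
  rw [proj_natCast] at hdvd hle
  obtain ⟨c, hc⟩ := hdvd
  have hc2 : c ≤ 2 := Nat.le_of_mul_le_mul_left (by rw [← hc]; linarith) hp₀
  interval_cases c <;> omega

/-- for `a < 2^n`, either `p_{n+1}(a) = p_n(a)` or `p_{n+1}(a) = 2·p_n(a)`. -/
theorem period_stays_or_doubles (n : ℕ) (a : ℕ) (ha : a < 2^n)
    (op₀ : Fin (2^n) → Fin (2^n) → Fin (2^n)) (hop₀ : IsCyclicLD n op₀)
    (op₁ : Fin (2^(n+1)) → Fin (2^(n+1)) → Fin (2^(n+1))) (hop₁ : IsCyclicLD (n+1) op₁) :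
    period (n+1) op₁ ((a : ℕ) : Fin (2^(n+1))) = period n op₀ ((a : ℕ) : Fin (2^n)) ∨
    period (n+1) op₁ ((a : ℕ) : Fin (2^(n+1))) = 2 * period n op₀ ((a : ℕ) : Fin (2^n)) :=
  period_stays_or_doubles_general n a op₀ hop₀ op₁ hop₁
end

section
/- Let n ≥ 1 and let a < 2^n − 1 be an element of A_n, with period p_n(a) = 2^k (so k ≥ 1). Then there exists c with a *_n c ≥ 2^{n−1}, and the least such c (the threshold t_n(a)) satisfies t_n(a) ≤ 2^{k−1}. -/
/-!
Write `⋆` for the operation of `A_m`. Reduction modulo `2^m` is a homomorphism `A_{m+1} → A_m`: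
the half element `2^m` of `A_{m+1}` has period `2^m` and sends `y` to a lift of `y mod 2^m`, and
left multiplication by it is an endomorphism. Induction along these reductions shows that
`x ⋆ x = 0` holds in `A_m` only for `x = 2^m - 2^j`, and that `2^(k+1)` divides `2^k ⋆ 2^k`.

If `p_n(a) = 2^(k+1)`, then `z = a ⋆ 2^k` is nonzero while `z ⋆ z = a ⋆ (2^k ⋆ 2^k) = 0`.
Hence `z = 2^n - 2^j` with `j < n`, so `z ≥ 2^(n-1)` and the threshold of `a` is at most `2^k`.
-/

open Fin.NatCast

namespace LaverTable

lemma dvd_two_pow_of_lt {p a j : ℕ} (hp : p ∣ 2 ^ a) (hlt : p < 2 ^ (j + 1)) : p ∣ 2 ^ j := by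
  obtain ⟨i, -, rfl⟩ := (Nat.dvd_prime_pow Nat.prime_two).mp hp
  exact pow_dvd_pow 2 (Nat.lt_succ_iff.mp ((Nat.pow_lt_pow_iff_right (by norm_num)).mp hlt))

lemma dvd_two_pow_of_dvd_sub {p a m j : ℕ} (hp : p ∣ 2 ^ a) (hsub : p ∣ 2 ^ m - 2 ^ j)
    (hj : j < m) : p ∣ 2 ^ j := by
  obtain ⟨i, -, rfl⟩ := (Nat.dvd_prime_pow Nat.prime_two).mp hp
  have hodd : Odd (2 ^ (m - j) - 1) :=
    Nat.Even.sub_odd (Nat.one_le_two_pow) ((Nat.even_pow' (by omega)).mpr even_two) odd_one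
  have hfac : 2 ^ m - 2 ^ j = 2 ^ j * (2 ^ (m - j) - 1) := by
    rw [Nat.mul_sub_one, ← pow_add, Nat.add_sub_cancel' hj.le]
  rw [hfac] at hsub
  exact (Nat.Coprime.pow_left i (Nat.coprime_two_left.mpr hodd)).dvd_of_dvd_mul_right hsub

variable {m : ℕ}

/-- The representative of `x` in `{1, …, 2^m}`: the class of `0` stands for `2^m`, the largest
element of the Laver table. -/
def rep (x : Fin (2^m)) : ℕ := if x = 0 then 2^m else x.val

lemma rep_le (x : Fin (2^m)) : rep x ≤ 2^m := by
  unfold rep; split_ifs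
  · exact le_rfl
  · exact x.isLt.le

lemma rep_of_ne_zero {x : Fin (2^m)} (hx : x ≠ 0) : rep x = x.val := if_neg hx

lemma rep_eq_two_pow_iff {x : Fin (2^m)} : rep x = 2^m ↔ x = 0 := by
  unfold rep; split_ifs with h
  · simp [h]
  · simp only [h, iff_false]; exact x.isLt.ne

lemma natCast_val_add_one (x : Fin (2^m)) : ((x.val + 1 : ℕ) : Fin (2^m)) = x + 1 := by
  rw [Nat.cast_add_one, Fin.cast_val_eq_self]

lemma val_lt_rep_add_one (x : Fin (2^m)) : x.val < rep (x + 1) := by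
  unfold rep
  split_ifs with h
  · exact x.isLt
  · rw [← natCast_val_add_one] at h ⊢
    have hlt : x.val + 1 < 2^m :=
      lt_of_le_of_ne x.isLt fun heq => h (by rw [heq, Fin.natCast_self])
    rw [Fin.val_natCast, Nat.mod_eq_of_lt hlt]
    omega

@[elab_as_elim]
lemma rep_induction {P : Fin (2^m) → Prop} (ih : ∀ x, (∀ y, rep x < rep y → P y) → P x)
    (x : Fin (2^m)) : P x := by
  induction h : 2^m - rep x using Nat.strong_induction_on generalizing x with
  | _ n IH => exact ih x fun y hy => IH _ (by have := rep_le y; omega) y rfl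

lemma natCast_val_add_two_pow (x : Fin (2^m)) : ((x.val + 2^m : ℕ) : Fin (2^m)) = x := by
  rw [Nat.cast_add, Fin.natCast_self, add_zero, Fin.cast_val_eq_self]

section Row

variable {op : Fin (2^m) → Fin (2^m) → Fin (2^m)} (hop : IsCyclicLD m op)
include hop

lemma op_natCast_succ (x : Fin (2^m)) (c : ℕ) :
    op x ((c + 1 : ℕ) : Fin (2^m)) = op (op x c) (x + 1) := by
  rw [Nat.cast_add_one, ← hop.2, hop.1, hop.2]

lemma op_zero_left (b : Fin (2^m)) : op 0 b = b := by
  have hcol : ∀ c : ℕ, op 0 ((c + 1 : ℕ) : Fin (2^m)) = ((c + 1 : ℕ) : Fin (2^m)) := by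
    intro c
    induction c with
    | zero => simpa using hop.2 0
    | succ c ih => rw [op_natCast_succ hop, ih, zero_add, hop.2, ← Nat.cast_add_one]
  have hb := hcol (b.val + 2^m - 1)
  rwa [Nat.sub_add_cancel (by have := Nat.one_le_two_pow (n := m); omega),
    natCast_val_add_two_pow] at hb

lemma rep_lt_rep_op {x : Fin (2^m)} (hx : x ≠ 0) (b : Fin (2^m)) : rep x < rep (op x b) := by
  induction x using rep_induction generalizing b with
  | ih x IH =>
  suffices h : ∀ c, 1 ≤ c → rep x < rep (op x (c : ℕ)) by
    simpa only [natCast_val_add_two_pow] using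
      h (b.val + 2^m) (by have := Nat.one_le_two_pow (n := m); omega)
  intro c hc
  induction c, hc using Nat.le_induction with
  | base => rw [Nat.cast_one, hop.2, rep_of_ne_zero hx]; exact val_lt_rep_add_one x
  | succ c _ ihc =>
    rw [op_natCast_succ hop]
    by_cases h0 : op x c = 0
    · rw [h0, op_zero_left hop, rep_of_ne_zero hx]; exact val_lt_rep_add_one x
    · exact ihc.trans (IH _ ihc h0 _)

lemma add_le_rep_op {x : Fin (2^m)} {c : ℕ} (hc : 0 < c)
    (hne : ∀ d, 0 < d → d < c → op x d ≠ 0) : x.val + c ≤ rep (op x c) := by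
  induction c, hc using Nat.le_induction with
  | base => rw [Nat.cast_one, hop.2]; exact val_lt_rep_add_one x
  | succ c hc ihc =>
    rw [op_natCast_succ hop]
    have := rep_lt_rep_op hop (hne c hc (by omega)) (x + 1)
    have := ihc fun d hd hdc => hne d hd (by omega)
    omega

lemma exists_op_natCast_eq_zero (x : Fin (2^m)) :
    ∃ p, 0 < p ∧ p ≤ 2^m - x.val ∧ op x p = 0 := by
  by_contra! h
  have hpos : 0 < 2^m - x.val := Nat.sub_pos_of_lt x.isLt
  have hle := add_le_rep_op hop hpos fun d hd hdc => h d hd hdc.le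
  refine h _ hpos le_rfl (rep_eq_two_pow_iff.mp (le_antisymm (rep_le _) ?_))
  omega

lemma op_zero_right (x : Fin (2^m)) : op x 0 = 0 := by
  induction x using rep_induction with
  | ih x IH =>
  by_cases hx : x = 0
  · rw [hx, op_zero_left hop]
  obtain ⟨p, -, -, hp⟩ := exists_op_natCast_eq_zero hop x
  calc op x 0 = op x (op x p) := by rw [hp]
    _ = op (op x x) 0 := by rw [hop.1, hp]
    _ = 0 := IH _ (rep_lt_rep_op hop hx x)

lemma period_spec (x : Fin (2^m)) : 0 < period m op x ∧ op x (period m op x) = 0 := by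
  refine Nat.sInf_mem (s := {p : ℕ | 0 < p ∧ op x p = 0}) ⟨2^m, by positivity, ?_⟩
  rw [Fin.natCast_self, op_zero_right hop]

lemma period_pos (x : Fin (2^m)) : 0 < period m op x := (period_spec hop x).1

lemma op_period (x : Fin (2^m)) : op x (period m op x) = 0 := (period_spec hop x).2

omit hop in
lemma period_le {x : Fin (2^m)} {c : ℕ} (hc : 0 < c) (h : op x c = 0) : period m op x ≤ c :=
  Nat.sInf_le ⟨hc, h⟩

lemma period_le_two_pow_sub (x : Fin (2^m)) : period m op x ≤ 2^m - x.val := by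
  obtain ⟨p, hp, hpx, hzero⟩ := exists_op_natCast_eq_zero hop x
  exact (period_le hp hzero).trans hpx

lemma op_natCast_add_period (x : Fin (2^m)) (c : ℕ) :
    op x ((c + period m op x : ℕ) : Fin (2^m)) = op x c := by
  induction c with
  | zero => rw [zero_add, op_period hop, Nat.cast_zero, op_zero_right hop]
  | succ c ih => rw [Nat.add_right_comm, op_natCast_succ hop, ih, ← op_natCast_succ hop]

lemma op_natCast_add_mul_period (x : Fin (2^m)) (c q : ℕ) :
    op x ((c + period m op x * q : ℕ) : Fin (2^m)) = op x c := by
  induction q with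
  | zero => rw [mul_zero, add_zero]
  | succ q ih => rw [mul_add_one, ← add_assoc, op_natCast_add_period hop, ih]

lemma op_natCast_mod_period (x : Fin (2^m)) (c : ℕ) :
    op x ((c % period m op x : ℕ) : Fin (2^m)) = op x c := by
  conv_rhs => rw [← Nat.mod_add_div c (period m op x)]
  rw [op_natCast_add_mul_period hop]

lemma op_natCast_eq_zero_iff (x : Fin (2^m)) (c : ℕ) : op x c = 0 ↔ period m op x ∣ c := by
  refine ⟨fun h => Nat.dvd_of_mod_eq_zero ?_, fun ⟨q, hq⟩ => ?_⟩
  · by_contra hne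
    rw [← op_natCast_mod_period hop] at h
    exact (Nat.mod_lt c (period_pos hop x)).not_ge (period_le (Nat.pos_of_ne_zero hne) h)
  · rw [hq, ← zero_add (period m op x * q), op_natCast_add_mul_period hop, Nat.cast_zero,
      op_zero_right hop]

lemma op_natCast_add_of_period_dvd (x : Fin (2^m)) {q : ℕ} (hq : period m op x ∣ q) (c : ℕ) :
    op x ((q + c : ℕ) : Fin (2^m)) = op x c := by
  obtain ⟨t, rfl⟩ := hq
  rw [add_comm, op_natCast_add_mul_period hop]

lemma period_dvd_two_pow (x : Fin (2^m)) : period m op x ∣ 2^m := by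
  rw [← op_natCast_eq_zero_iff hop, Fin.natCast_self, op_zero_right hop]

lemma period_eq_one_iff (x : Fin (2^m)) : period m op x = 1 ↔ x + 1 = 0 := by
  have h1 := op_natCast_eq_zero_iff hop x 1
  rw [Nat.cast_one, Nat.dvd_one] at h1
  rw [← hop.2, h1]

lemma rep_op_lt_rep_op (x : Fin (2^m)) {c d : ℕ} (hc : 0 < c) (hcd : c < d)
    (hd : d < period m op x) : rep (op x c) < rep (op x d) := by
  have hstep : ∀ e, 0 < e → e < period m op x → rep (op x e) < rep (op x (e + 1 : ℕ)) :=
    fun e he hep => by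
      rw [op_natCast_succ hop]
      exact rep_lt_rep_op hop (fun h => (period_le he h).not_gt hep) _
  induction d, hcd using Nat.le_induction with
  | base => exact hstep c hc (by omega)
  | succ d hcd ih => exact (ih (by omega)).trans (hstep d (by omega) (by omega))

lemma modEq_period_of_op_eq (x : Fin (2^m)) {c d : ℕ} (h : op x c = op x d)
    (h0 : op x c ≠ 0) : c ≡ d [MOD period m op x] := by
  have hpos := period_pos hop x
  rw [← op_natCast_mod_period hop x c, ← op_natCast_mod_period hop x d] at h
  rw [← op_natCast_mod_period hop x c] at h0
  have hc : 0 < c % period m op x := Nat.pos_of_ne_zero fun h' => by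
    rw [h', Nat.cast_zero, op_zero_right hop] at h0; exact h0 rfl
  have hd : 0 < d % period m op x := Nat.pos_of_ne_zero fun h' => by
    rw [h, h', Nat.cast_zero, op_zero_right hop] at h0; exact h0 rfl
  rcases lt_trichotomy (c % period m op x) (d % period m op x) with hlt | heq | hgt
  · exact absurd (congrArg rep h) (rep_op_lt_rep_op hop x hc hlt (Nat.mod_lt _ hpos)).ne
  · exact heq
  · exact absurd (congrArg rep h) (rep_op_lt_rep_op hop x hd hgt (Nat.mod_lt _ hpos)).ne'

lemma op_natCast_eq_natCast_add {x n : ℕ}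
    (hper : ∀ c, 0 < c → c < n → period m op ((x + c : ℕ) : Fin (2^m)) ∣ x) :
    ∀ c, 0 < c → c ≤ n → op (x : Fin (2^m)) c = ((x + c : ℕ) : Fin (2^m)) := by
  intro c hc
  induction c, hc using Nat.le_induction with
  | base => intro; rw [Nat.cast_one, hop.2, Nat.cast_add_one]
  | succ c hc ih =>
    intro hcn
    rw [op_natCast_succ hop, ih (by omega), ← Nat.cast_add_one,
      op_natCast_add_of_period_dvd hop _ (hper c hc (by omega)), Nat.cast_one, hop.2,
      ← Nat.cast_add_one, add_assoc]

lemma period_dvd_two_pow_of_lt_add (x : Fin (2^m)) {j : ℕ} (h : 2^m < x.val + 2^(j + 1)) :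
    period m op x ∣ 2^j :=
  dvd_two_pow_of_lt (period_dvd_two_pow hop x)
    (by have := period_le_two_pow_sub hop x; omega)

end Row

def reduce (x : Fin (2^(m+1))) : Fin (2^m) := (x.val : Fin (2^m))

lemma val_reduce (x : Fin (2^(m+1))) : (reduce x).val = x.val % 2^m := Fin.val_natCast _ _

lemma reduce_natCast (c : ℕ) : reduce (c : Fin (2^(m+1))) = (c : Fin (2^m)) := by
  ext
  rw [val_reduce, Fin.val_natCast, Fin.val_natCast,
    Nat.mod_mod_of_dvd c (pow_dvd_pow 2 m.le_succ)]

lemma reduce_natCast_val (a : Fin (2^m)) : reduce (a.val : Fin (2^(m+1))) = a := by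
  rw [reduce_natCast, Fin.cast_val_eq_self]

lemma reduce_zero : reduce (0 : Fin (2^(m+1))) = 0 := by
  simpa using reduce_natCast (m := m) 0

lemma reduce_one : reduce (1 : Fin (2^(m+1))) = 1 := by
  simpa using reduce_natCast (m := m) 1

lemma reduce_add_one (x : Fin (2^(m+1))) : reduce (x + 1) = reduce x + 1 := by
  rw [← natCast_val_add_one, reduce_natCast, Nat.cast_add_one, reduce]

lemma reduce_eq_zero_iff {y : Fin (2^(m+1))} : reduce y = 0 ↔ y.val = 0 ∨ y.val = 2^m := by
  rw [← Fin.val_eq_zero_iff, val_reduce]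
  have hy := y.isLt
  have h2 := pow_succ 2 m
  constructor
  · intro h
    obtain ⟨t, ht⟩ := Nat.dvd_of_mod_eq_zero h
    have ht2 : t < 2 := by
      by_contra! hge
      have := Nat.mul_le_mul_left (2^m) hge
      omega
    interval_cases t <;> simp_all
  · rintro (h | h) <;> simp [h]

def quotOp (op : Fin (2^(m+1)) → Fin (2^(m+1)) → Fin (2^(m+1))) (a b : Fin (2^m)) :
    Fin (2^m) :=
  reduce (op a.val b.val)

section Quotient

variable {op : Fin (2^(m+1)) → Fin (2^(m+1)) → Fin (2^(m+1))} (hop : IsCyclicLD (m+1) op)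
include hop

lemma op_two_pow_natCast {c : ℕ} (hc : 0 < c) (hcm : c ≤ 2^m) :
    op (2^m : ℕ) c = ((2^m + c : ℕ) : Fin (2^(m+1))) := by
  refine op_natCast_eq_natCast_add hop (fun d hd hdm => ?_) c hc hcm
  refine period_dvd_two_pow_of_lt_add hop _ ?_
  rw [Fin.val_cast_of_lt (by rw [pow_succ]; omega)]
  omega

lemma period_two_pow : period (m+1) op (2^m : ℕ) = 2^m := by
  have hdvd : period (m+1) op (2^m : ℕ) ∣ 2^m := by
    rw [← op_natCast_eq_zero_iff hop, op_two_pow_natCast hop (by positivity) le_rfl, ← two_mul,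
      ← pow_succ', Fin.natCast_self]
  refine le_antisymm (Nat.le_of_dvd (by positivity) hdvd) (not_lt.mp fun hlt => ?_)
  have h0 := op_period hop (2^m : ℕ)
  rw [op_two_pow_natCast hop (period_pos hop _) hlt.le, Fin.natCast_eq_zero] at h0
  have := Nat.le_of_dvd (by positivity) h0
  have := pow_succ 2 m
  omega

lemma op_two_pow_eq_of_reduce_eq {x y : Fin (2^(m+1))} (h : reduce x = reduce y) :
    op (2^m : ℕ) x = op (2^m : ℕ) y := by
  have hval := congrArg Fin.val h
  rw [val_reduce, val_reduce] at hval
  rw [← Fin.cast_val_eq_self x, ← Fin.cast_val_eq_self y, ← op_natCast_mod_period hop _ x.val,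
    ← op_natCast_mod_period hop _ y.val, period_two_pow hop, hval]

lemma reduce_op_two_pow (y : Fin (2^(m+1))) : reduce (op (2^m : ℕ) y) = reduce y := by
  rw [← Fin.cast_val_eq_self y, ← op_natCast_mod_period hop, period_two_pow hop, reduce_natCast,
    CharP.cast_eq_mod (Fin (2^m)) (2^m)]
  rcases (y.val % 2^m).eq_zero_or_pos with h0 | hpos
  · rw [h0, Nat.cast_zero, op_zero_right hop, reduce_zero, Nat.cast_zero]
  · rw [op_two_pow_natCast hop hpos (Nat.mod_lt _ (by positivity)).le, reduce_natCast,
      Nat.cast_add, Fin.natCast_self, zero_add]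

-- `2^m ⋆ y` depends only on `reduce y` and has the same reduction, and `2^m ⋆ -` is an
-- endomorphism of `A_{m+1}`.
lemma reduce_op_eq_of_reduce_eq {x₁ x₂ y₁ y₂ : Fin (2^(m+1))} (hx : reduce x₁ = reduce x₂)
    (hy : reduce y₁ = reduce y₂) : reduce (op x₁ y₁) = reduce (op x₂ y₂) := by
  rw [← reduce_op_two_pow hop (op x₁ y₁), hop.1, op_two_pow_eq_of_reduce_eq hop hx,
    op_two_pow_eq_of_reduce_eq hop hy, ← hop.1, reduce_op_two_pow hop]

lemma reduce_op (x y : Fin (2^(m+1))) : reduce (op x y) = quotOp op (reduce x) (reduce y) :=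
  reduce_op_eq_of_reduce_eq hop (reduce_natCast_val _).symm (reduce_natCast_val _).symm

lemma isCyclicLD_quotOp : IsCyclicLD m (quotOp op) := by
  have hsurj : ∀ a : Fin (2^m), ∃ x, reduce x = a := fun a => ⟨_, reduce_natCast_val a⟩
  constructor
  · intro a b c
    obtain ⟨x, rfl⟩ := hsurj a
    obtain ⟨y, rfl⟩ := hsurj b
    obtain ⟨z, rfl⟩ := hsurj c
    rw [← reduce_op hop y z, ← reduce_op hop x, ← reduce_op hop x y, ← reduce_op hop x z,
      ← reduce_op hop, hop.1]
  · intro a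
    obtain ⟨x, rfl⟩ := hsurj a
    rw [← reduce_add_one, ← hop.2, reduce_op hop, reduce_one]

lemma val_op_natCast_eq_zero_or_eq_two_pow (x : Fin (2^(m+1))) {q : ℕ}
    (hq : period m (quotOp op) (reduce x) ∣ q) : (op x q).val = 0 ∨ (op x q).val = 2^m := by
  rwa [← reduce_eq_zero_iff, reduce_op hop, reduce_natCast,
    op_natCast_eq_zero_iff (isCyclicLD_quotOp hop)]

lemma period_dvd_two_mul_period_quotOp (x : Fin (2^(m+1))) :
    period (m+1) op x ∣ 2 * period m (quotOp op) (reduce x) := by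
  set p' := period m (quotOp op) (reduce x)
  by_contra hndvd
  have h2 : op x (2 * p' : ℕ) ≠ 0 := by rwa [Ne, op_natCast_eq_zero_iff hop]
  have h1 : op x p' ≠ 0 := fun h =>
    hndvd (((op_natCast_eq_zero_iff hop _ _).mp h).mul_left 2)
  -- both columns lie over `0` in `A_m`, so both equal `2^m`
  have heq : op x p' = op x (2 * p' : ℕ) := by
    have hv1 := val_op_natCast_eq_zero_or_eq_two_pow hop x (dvd_refl p')
    have hv2 := val_op_natCast_eq_zero_or_eq_two_pow hop x (dvd_mul_left p' 2)
    have hn1 : (op x p').val ≠ 0 := fun h => h1 (Fin.ext h)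
    have hn2 : (op x (2 * p' : ℕ)).val ≠ 0 := fun h => h2 (Fin.ext h)
    exact Fin.ext (by omega)
  have hmod : p' + 0 ≡ p' + p' [MOD period (m+1) op x] := by
    simpa [two_mul] using modEq_period_of_op_eq hop x heq h1
  exact h1 ((op_natCast_eq_zero_iff hop _ _).mpr
    (Nat.modEq_zero_iff_dvd.mp (Nat.ModEq.add_left_cancel' p' hmod).symm))

lemma period_dvd_two_pow_of_lt_two_pow {x : Fin (2^(m+1))} {j : ℕ} (hx : x.val < 2^m)
    (hj : 2^m < x.val + 2^j) : period (m+1) op x ∣ 2^j := by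
  have hj0 : j ≠ 0 := by rintro rfl; rw [pow_zero] at hj; omega
  obtain ⟨i, rfl⟩ : ∃ i, j = i + 1 := ⟨j - 1, by omega⟩
  have hval : (reduce x).val = x.val := by rw [val_reduce, Nat.mod_eq_of_lt hx]
  have hi := period_dvd_two_pow_of_lt_add (isCyclicLD_quotOp hop) (reduce x) (j := i)
    (by rw [hval]; exact hj)
  exact (period_dvd_two_mul_period_quotOp hop x).trans
    (by rw [pow_succ']; exact mul_dvd_mul_left 2 hi)

lemma op_two_pow_sub_two_pow {j : ℕ} (hj : j < m) :
    op ((2^m - 2^j : ℕ) : Fin (2^(m+1))) (2^j : ℕ) = (2^m : ℕ) := by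
  have hjm : 2^j < 2^m := Nat.pow_lt_pow_right (by norm_num) hj
  have hdvd : 2^j ∣ 2^m - 2^j := Nat.dvd_sub (pow_dvd_pow 2 hj.le) dvd_rfl
  have hchain := op_natCast_eq_natCast_add hop (x := 2^m - 2^j) (n := 2^j)
    (fun c hc hcj => (period_dvd_two_pow_of_lt_two_pow hop ?_ ?_).trans hdvd) (2^j)
    (by positivity) le_rfl
  · rwa [Nat.sub_add_cancel hjm.le] at hchain
  all_goals
    have := pow_succ 2 m
    rw [Fin.val_cast_of_lt (by omega)]
    omega

end Quotient

theorem exists_val_add_two_pow_of_op_self_eq_zero {op : Fin (2^m) → Fin (2^m) → Fin (2^m)}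
    (hop : IsCyclicLD m op) {x : Fin (2^m)} (h : op x x = 0) : ∃ j ≤ m, x.val + 2^j = 2^m := by
  induction m with
  | zero => exact ⟨0, le_rfl, by have := x.isLt; simp only [pow_zero] at this ⊢; omega⟩
  | succ m ih =>
    obtain ⟨j, hjm, hj⟩ := ih (isCyclicLD_quotOp hop) (x := reduce x)
      (by rw [← reduce_op hop, h, reduce_zero])
    have hx := x.isLt
    have h2 := pow_succ 2 m
    rw [val_reduce] at hj
    by_cases hxm : 2^m ≤ x.val
    · rw [Nat.mod_eq_sub_mod hxm, Nat.mod_eq_of_lt (by omega)] at hj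
      exact ⟨j, by omega, by omega⟩
    rw [Nat.mod_eq_of_lt (by omega)] at hj
    rcases hjm.lt_or_eq with hjm | hjm
    · -- `x = 2^m - 2^j`, `j < m`: its period divides `x`, hence `2^j`, yet `x ⋆ 2^j = 2^m`
      have hxv : 2^m - 2^j = x.val := by omega
      have hper : period (m+1) op x ∣ 2^j := by
        refine dvd_two_pow_of_dvd_sub (period_dvd_two_pow hop x) ?_ hjm
        rw [hxv, ← op_natCast_eq_zero_iff hop, Fin.cast_val_eq_self, h]
      have hcol := op_two_pow_sub_two_pow hop hjm
      rw [hxv, Fin.cast_val_eq_self, (op_natCast_eq_zero_iff hop x _).mpr hper,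
        eq_comm, Fin.natCast_eq_zero] at hcol
      have := Nat.le_of_dvd (by positivity) hcol
      omega
    · exact ⟨m + 1, le_rfl, by subst hjm; omega⟩

theorem two_pow_pred_le_val_of_op_self_eq_zero {op : Fin (2^m) → Fin (2^m) → Fin (2^m)}
    (hop : IsCyclicLD m op) {x : Fin (2^m)} (hx : x ≠ 0) (h : op x x = 0) :
    2^(m-1) ≤ x.val := by
  obtain ⟨j, hjm, hj⟩ := exists_val_add_two_pow_of_op_self_eq_zero hop h
  have hjm : j < m := lt_of_le_of_ne hjm fun hjm =>
    hx (Fin.ext (by rw [Fin.val_zero]; subst hjm; omega))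
  obtain ⟨m, rfl⟩ : ∃ k, m = k + 1 := ⟨m - 1, by omega⟩
  have := Nat.pow_le_pow_right (n := 2) (by norm_num) (Nat.lt_succ_iff.mp hjm)
  have := pow_succ 2 m
  simp only [Nat.add_sub_cancel]
  omega

theorem two_pow_succ_dvd_val_op_two_pow {op : Fin (2^m) → Fin (2^m) → Fin (2^m)}
    (hop : IsCyclicLD m op) {k : ℕ} (hk : k < m) :
    2^(k+1) ∣ (op (2^k : ℕ) (2^k : ℕ)).val := by
  induction m with
  | zero => exact absurd hk (Nat.not_lt_zero k)
  | succ m ih =>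
    rcases (Nat.lt_succ_iff.mp hk).lt_or_eq with hk | rfl
    · rw [← Nat.dvd_mod_iff (pow_dvd_pow 2 hk), ← val_reduce, reduce_op hop, reduce_natCast]
      exact ih (isCyclicLD_quotOp hop) hk
    · rw [op_two_pow_natCast hop (by positivity) le_rfl, ← two_mul, ← pow_succ',
        Fin.natCast_self, Fin.val_zero]
      exact dvd_zero _

end LaverTable

open LaverTable

theorem threshold_exists_le_general (n : ℕ) (a : ℕ) (ha : a < 2^n - 1) (k : ℕ)
    (op : Fin (2^n) → Fin (2^n) → Fin (2^n)) (hop : IsCyclicLD n op)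
    (hk : period n op ((a : ℕ) : Fin (2^n)) = 2^k) :
    1 ≤ k ∧
    ∃ t : ℕ, IsLeast {c : ℕ | 2^(n-1) ≤ (op ((a : ℕ) : Fin (2^n)) ((c : ℕ) : Fin (2^n))).val} t ∧
      t ≤ 2^(k-1) := by
  have hk1 : 1 ≤ k := by
    by_contra! hk0
    rw [Nat.lt_one_iff.mp hk0, pow_zero, period_eq_one_iff hop, ← Nat.cast_add_one,
      Fin.natCast_eq_zero] at hk
    have := Nat.le_of_dvd (by omega) hk
    omega
  obtain ⟨k, rfl⟩ : ∃ i, k = i + 1 := ⟨k - 1, by omega⟩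
  have hkn : k < n := (Nat.pow_dvd_pow_iff_le_right (by norm_num)).mp
    (hk ▸ period_dvd_two_pow hop (a : Fin (2^n)))
  set z := op (a : Fin (2^n)) (2^k : ℕ)
  have hz : z ≠ 0 := by
    rw [Ne, op_natCast_eq_zero_iff hop, hk]
    exact Nat.not_dvd_of_pos_of_lt (by positivity)
      (Nat.pow_lt_pow_right (by norm_num) k.lt_succ_self)
  have hzz : op z z = 0 := by
    rw [← hop.1, ← Fin.cast_val_eq_self (op ((2^k : ℕ) : Fin (2^n)) (2^k : ℕ)),
      op_natCast_eq_zero_iff hop, hk]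
    exact two_pow_succ_dvd_val_op_two_pow hop hkn
  have hmem : 2^k ∈ {c : ℕ | 2^(n-1) ≤ (op (a : Fin (2^n)) (c : Fin (2^n))).val} :=
    two_pow_pred_le_val_of_op_self_eq_zero hop hz hzz
  exact ⟨hk1, _, isLeast_csInf ⟨_, hmem⟩, csInf_le' hmem⟩

/-- for `n ≥ 1` and `a < 2^n − 1` with period `p_n(a) = 2^k`, one has
`k ≥ 1`, the set `{c | a *_n c ≥ 2^{n−1}}` is nonempty, and its least element
(the threshold `t_n(a)`) is at most `2^{k−1}`. -/
theorem threshold_exists_le (n : ℕ) (hn : 1 ≤ n) (a : ℕ) (ha : a < 2^n - 1) (k : ℕ)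
    (op : Fin (2^n) → Fin (2^n) → Fin (2^n)) (hop : IsCyclicLD n op)
    (hk : period n op ((a : ℕ) : Fin (2^n)) = 2^k) :
    1 ≤ k ∧
    ∃ t : ℕ, IsLeast {c : ℕ | 2^(n-1) ≤ (op ((a : ℕ) : Fin (2^n)) ((c : ℕ) : Fin (2^n))).val} t ∧
      t ≤ 2^(k-1) :=
  threshold_exists_le_general n a ha k op hop hk
end
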